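/- arXiv:2509.06084 — 5 statements merged into one kernel-verified Lean document; each statement's English description precedes it below -/
import Mathlib

section
/- For every real number x > 0, tanh(x) < x(15 + x^2)/(15 + 6x^2). -/
/-!
Clearing denominators, the claim is `g x > 0` for
`g x = x (15 + x²) cosh x - (15 + 6x²) sinh x`. Now `g 0 = 0` and
`g' x = x ((x² + 3) sinh x - 3x cosh x)`; the bracket vanishes at `0` and has derivative
`x (x cosh x - sinh x)`, whose bracket vanishes at `0` and has derivative `x sinh x > 0`.
Three applications of "vanishes at `0` and increases" give the inequality.
-/

open Real Set

theorem lt_of_hasDerivAt_pos {f f' : ℝ → ℝ} {a x : ℝ} (hf : ∀ y, HasDerivAt f (f' y) y)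
    (hf' : ∀ y, a < y → 0 < f' y) (hax : a < x) : f a < f x :=
  strictMonoOn_of_hasDerivWithinAt_pos (convex_Ici a)
    (fun y _ ↦ (hf y).continuousAt.continuousWithinAt)
    (fun y _ ↦ (hf y).hasDerivWithinAt)
    (fun y hy ↦ hf' y (by rwa [interior_Ici] at hy)) self_mem_Ici hax.le hax

namespace Real

variable {x : ℝ}

theorem sinh_lt_mul_cosh (hx : 0 < x) : sinh x < x * cosh x := by
  have hd (y : ℝ) : HasDerivAt (fun y ↦ y * cosh y - sinh y) (y * sinh y) y :=
    (((hasDerivAt_id' y).mul (hasDerivAt_cosh y)).sub (hasDerivAt_sinh y)).congr_deriv (by ring)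
  have := lt_of_hasDerivAt_pos hd (fun y hy ↦ mul_pos hy (sinh_pos_iff.2 hy)) hx
  simp only [zero_mul, sinh_zero, sub_zero] at this
  linarith

theorem three_mul_mul_cosh_lt_mul_sinh (hx : 0 < x) : 3 * x * cosh x < (x ^ 2 + 3) * sinh x := by
  have hd (y : ℝ) : HasDerivAt (fun y ↦ (y ^ 2 + 3) * sinh y - 3 * y * cosh y)
      (y * (y * cosh y - sinh y)) y := by
    have := ((((hasDerivAt_pow 2 y).add_const 3).mul (hasDerivAt_sinh y)).sub
      (((hasDerivAt_id' y).const_mul 3).mul (hasDerivAt_cosh y)))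
    exact this.congr_deriv (by push_cast; ring)
  have := lt_of_hasDerivAt_pos hd
    (fun y hy ↦ mul_pos hy (sub_pos.2 (sinh_lt_mul_cosh hy))) hx
  simp only [sinh_zero, mul_zero, cosh_zero] at this
  linarith

theorem mul_sinh_lt_mul_cosh (hx : 0 < x) :
    (15 + 6 * x ^ 2) * sinh x < x * (15 + x ^ 2) * cosh x := by
  have hd (y : ℝ) : HasDerivAt (fun y ↦ y * (15 + y ^ 2) * cosh y - (15 + 6 * y ^ 2) * sinh y)
      (y * ((y ^ 2 + 3) * sinh y - 3 * y * cosh y)) y := by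
    have := ((((hasDerivAt_id' y).mul ((hasDerivAt_pow 2 y).const_add 15)).mul
      (hasDerivAt_cosh y)).sub
      ((((hasDerivAt_pow 2 y).const_mul 6).const_add 15).mul (hasDerivAt_sinh y)))
    exact this.congr_deriv (by simp only [Pi.mul_apply]; push_cast; ring)
  have := lt_of_hasDerivAt_pos hd
    (fun y hy ↦ mul_pos hy (sub_pos.2 (three_mul_mul_cosh_lt_mul_sinh hy))) hx
  simp only [zero_mul, sinh_zero, mul_zero, sub_zero] at this
  linarith

end Real

theorem stmt_0 : ∀ x : ℝ, 0 < x →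
    Real.tanh x < x * (15 + x ^ 2) / (15 + 6 * x ^ 2) := by
  intro x hx
  rw [Real.tanh_eq_sinh_div_cosh, div_lt_div_iff₀ (Real.cosh_pos x) (by positivity)]
  linarith [Real.mul_sinh_lt_mul_cosh hx]
end

section
/- For every real number x > 0, tanh(x) > (10x^3 + 105x)/(x^4 + 45x^2 + 105). -/
/-!
With `N x = 10x³ + 105x` and `D x = x⁴ + 45x² + 105`, the bound `N/D < tanh x` is equivalent to
`D + N < e^{2x} (D - N)`: `(D + N)/(D - N)` is the [4/4] Padé approximant of `e^{2x}`. The function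
`2x - log (D + N) + log (D - N)` vanishes at `0`, and the Padé property makes its derivative
collapse to `2x⁸ / ((D + N)(D - N))`, which is positive for `x > 0` since `|N| < D` everywhere.
-/

open Real

def tanhPadeNum (x : ℝ) : ℝ := 10 * x ^ 3 + 105 * x

def tanhPadeDen (x : ℝ) : ℝ := x ^ 4 + 45 * x ^ 2 + 105

lemma hasDerivAt_tanhPadeNum (x : ℝ) : HasDerivAt tanhPadeNum (30 * x ^ 2 + 105) x := by
  have := ((hasDerivAt_pow 3 x).const_mul 10).add ((hasDerivAt_id x).const_mul 105)
  exact this.congr_deriv (by norm_num; ring)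

lemma hasDerivAt_tanhPadeDen (x : ℝ) : HasDerivAt tanhPadeDen (4 * x ^ 3 + 90 * x) x := by
  have := ((hasDerivAt_pow 4 x).add ((hasDerivAt_pow 2 x).const_mul 45)).add_const 105
  exact this.congr_deriv (by norm_num; ring)

lemma abs_tanhPadeNum_lt_tanhPadeDen (x : ℝ) : |tanhPadeNum x| < tanhPadeDen x := by
  unfold tanhPadeNum tanhPadeDen
  rw [abs_lt]
  constructor
  · nlinarith [sq_nonneg (x ^ 2 + 5 * x + 8), sq_nonneg (x + 25 / 8)]
  · nlinarith [sq_nonneg (x ^ 2 - 5 * x + 8), sq_nonneg (x - 25 / 8)]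

lemma pos_of_hasDerivAt_pos {f f' : ℝ → ℝ} (hf : ∀ y, HasDerivAt f (f' y) y) (h0 : f 0 = 0)
    (hf' : ∀ y, 0 < y → 0 < f' y) {x : ℝ} (hx : 0 < x) : 0 < f x := by
  have hmono : StrictMonoOn f (Set.Ici 0) :=
    strictMonoOn_of_deriv_pos (convex_Ici 0) (fun y _ ↦ (hf y).continuousAt.continuousWithinAt)
      (fun y hy ↦ by rw [interior_Ici] at hy; rw [(hf y).deriv]; exact hf' y hy)
  simpa [h0] using hmono Set.self_mem_Ici hx.le hx

lemma tanhPadeDen_add_tanhPadeNum_lt_exp_mul {x : ℝ} (hx : 0 < x) :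
    tanhPadeDen x + tanhPadeNum x < exp (2 * x) * (tanhPadeDen x - tanhPadeNum x) := by
  have hadd (y : ℝ) : 0 < tanhPadeDen y + tanhPadeNum y := by
    linarith [neg_abs_le (tanhPadeNum y), abs_tanhPadeNum_lt_tanhPadeDen y]
  have hsub (y : ℝ) : 0 < tanhPadeDen y - tanhPadeNum y := by
    linarith [le_abs_self (tanhPadeNum y), abs_tanhPadeNum_lt_tanhPadeDen y]
  set g : ℝ → ℝ := fun y ↦
    2 * y - log (tanhPadeDen y + tanhPadeNum y) + log (tanhPadeDen y - tanhPadeNum y)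
  have hg (y : ℝ) : HasDerivAt g
      (2 * y ^ 8 / ((tanhPadeDen y + tanhPadeNum y) * (tanhPadeDen y - tanhPadeNum y))) y := by
    have hlog_add :=
      ((hasDerivAt_tanhPadeDen y).add (hasDerivAt_tanhPadeNum y)).log (hadd y).ne'
    have hlog_sub :=
      ((hasDerivAt_tanhPadeDen y).sub (hasDerivAt_tanhPadeNum y)).log (hsub y).ne'
    simp only [Pi.add_apply, Pi.sub_apply] at hlog_add hlog_sub
    refine ((((hasDerivAt_id y).const_mul 2).sub hlog_add).add hlog_sub).congr_deriv ?_
    field_simp [(hadd y).ne', (hsub y).ne']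
    unfold tanhPadeNum tanhPadeDen
    ring
  have hgx : 0 < g x := pos_of_hasDerivAt_pos hg (by simp [g, tanhPadeNum, tanhPadeDen])
    (fun y _ ↦ div_pos (by positivity) (mul_pos (hadd y) (hsub y))) hx
  calc tanhPadeDen x + tanhPadeNum x = exp (log (tanhPadeDen x + tanhPadeNum x)) :=
        (exp_log (hadd x)).symm
    _ < exp (2 * x + log (tanhPadeDen x - tanhPadeNum x)) := exp_lt_exp.2 (by linarith)
    _ = exp (2 * x) * (tanhPadeDen x - tanhPadeNum x) := by rw [exp_add, exp_log (hsub x)]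

lemma tanh_eq_exp_two_mul (x : ℝ) : tanh x = (exp (2 * x) - 1) / (exp (2 * x) + 1) := by
  rw [tanh_eq, two_mul, exp_add, exp_neg]
  field_simp

lemma div_lt_tanh_of_add_lt_exp_mul {n d x : ℝ} (hd : 0 < d)
    (h : d + n < exp (2 * x) * (d - n)) : n / d < tanh x := by
  rw [tanh_eq_exp_two_mul, div_lt_div_iff₀ hd (by positivity)]
  linear_combination h

theorem stmt_1 : ∀ x : ℝ, 0 < x →
    (10 * x ^ 3 + 105 * x) / (x ^ 4 + 45 * x ^ 2 + 105) < Real.tanh x :=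
  fun _ hx ↦ div_lt_tanh_of_add_lt_exp_mul (by positivity)
    (tanhPadeDen_add_tanhPadeNum_lt_exp_mul hx)
end

section
/- For all x with 0 < x ≤ 1, tanh(x) - x/(1 + x^2/3) ≤ (2/15) x^5. -/
theorem stmt_3 : ∀ x : ℝ, 0 < x → x ≤ 1 →
    Real.tanh x - x / (1 + x ^ 2 / 3) ≤ (2 / 15) * x ^ 5 := by
  intro x hx hx1
  set u := Real.exp x with hu
  have hupos : 0 < u := Real.exp_pos x
  -- Taylor upper bound for exp
  have hP : u ≤ 1 + x + x ^ 2 / 2 + x ^ 3 / 6 + x ^ 4 / 24 + x ^ 5 / 120 + 7 * x ^ 6 / 4320 := by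
    have h := Real.exp_bound' hx.le hx1 (n := 6) (by norm_num)
    norm_num [Finset.sum_range_succ, Nat.factorial] at h
    linarith
  have hu1 : 1 ≤ u := Real.one_le_exp hx.le
  have hu2 : u ^ 2 ≤ (1 + x + x ^ 2 / 2 + x ^ 3 / 6 + x ^ 4 / 24 + x ^ 5 / 120 + 7 * x ^ 6 / 4320) ^ 2 := by
    have hPpos : (0:ℝ) < 1 + x + x ^ 2 / 2 + x ^ 3 / 6 + x ^ 4 / 24 + x ^ 5 / 120 + 7 * x ^ 6 / 4320 := by positivity
    nlinarith
  -- coefficient of u^2 is nonnegative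
  have hA : (0:ℝ) ≤ 15 * (3 + x ^ 2) - 45 * x - 2 * x ^ 5 * (3 + x ^ 2) := by
    nlinarith [sq_nonneg (x - 1), sq_nonneg x, pow_le_one₀ hx.le hx1 (n := 5),
      pow_le_one₀ hx.le hx1 (n := 7), mul_pos hx hx]
  -- Q(x) ≥ 0 : the polynomial inequality after substituting u = P
  have hQ : 15 * ((1 + x + x ^ 2 / 2 + x ^ 3 / 6 + x ^ 4 / 24 + x ^ 5 / 120 + 7 * x ^ 6 / 4320) ^ 2 - 1) * (3 + x ^ 2) ≤ 45 * x * ((1 + x + x ^ 2 / 2 + x ^ 3 / 6 + x ^ 4 / 24 + x ^ 5 / 120 + 7 * x ^ 6 / 4320) ^ 2 + 1)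
      + 2 * x ^ 5 * (3 + x ^ 2) * ((1 + x + x ^ 2 / 2 + x ^ 3 / 6 + x ^ 4 / 24 + x ^ 5 / 120 + 7 * x ^ 6 / 4320) ^ 2 + 1) := by
    ring_nf
    nlinarith [pow_pos hx 5, pow_pos hx 6, pow_pos hx 7, pow_pos hx 8, pow_pos hx 9,
      pow_pos hx 10, pow_pos hx 11, pow_pos hx 12, pow_pos hx 13, pow_pos hx 14,
      pow_pos hx 15, pow_pos hx 16, pow_pos hx 17, pow_pos hx 18, pow_pos hx 19]
  have key : 15 * (u ^ 2 - 1) * (3 + x ^ 2) ≤ 45 * x * (u ^ 2 + 1)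
      + 2 * x ^ 5 * (3 + x ^ 2) * (u ^ 2 + 1) := by
    nlinarith [mul_nonneg hA (sub_nonneg.2 hu2)]
  -- rewrite tanh in terms of u
  have htanh : Real.tanh x = (u ^ 2 - 1) / (u ^ 2 + 1) := by
    rw [Real.tanh_eq_sinh_div_cosh, Real.sinh_eq, Real.cosh_eq, Real.exp_neg]
    rw [← hu]
    field_simp
  rw [htanh]
  have hden1 : (0:ℝ) < u ^ 2 + 1 := by positivity
  have hden2 : (0:ℝ) < 1 + x ^ 2 / 3 := by positivity
  rw [div_sub_div _ _ (ne_of_gt hden1) (ne_of_gt hden2), div_le_iff₀ (by positivity)]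
  nlinarith [key]
end

section
/- The function q₀(x,y) = -8(σ - 1/3) x / (x² + y² + 3σ - 1), for σ > 1/3, satisfies (σ - 1/3) ∂_x⁴ q₀ - ∂_x² q₀ - ∂_y² q₀ - (3/2) ∂_x((∂_x q₀)²) = 0 on ℝ². -/
/-!
Every slice of `q₀` is a rational function `p(t) / (t ^ 2 + a) ^ n` with `a > 0`, and by the
quotient rule such functions are differentiated within that class. Computing the needed
derivatives in closed form, the equation becomes an identity between rational functions with
common denominator `(x ^ 2 + y ^ 2 + 3σ - 1) ^ 5`.
-/

theorem hasDerivAt_div_sq_add_pow {a : ℝ} (ha : 0 < a) (n : ℕ) {p : ℝ → ℝ} {p' t : ℝ}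
    (hp : HasDerivAt p p' t) :
    HasDerivAt (fun t => p t / (t ^ 2 + a) ^ n)
      ((p' * (t ^ 2 + a) - 2 * n * t * p t) / (t ^ 2 + a) ^ (n + 1)) t := by
  have h0 : t ^ 2 + a ≠ 0 := by positivity
  refine (hp.div (((hasDerivAt_pow 2 t).add_const a).fun_pow n) (pow_ne_zero n h0)).congr_deriv ?_
  rcases n with _ | n
  · simp [h0]
  · simp only [Nat.add_sub_cancel, pow_succ]
    field_simp
    push_cast
    ring

section
variable {a : ℝ} (k : ℝ)

theorem deriv_mul_div_sq_add (ha : 0 < a) :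
    deriv (fun t => k * t / (t ^ 2 + a)) = fun t => k * (a - t ^ 2) / (t ^ 2 + a) ^ 2 := by
  funext t
  have h := hasDerivAt_div_sq_add_pow ha 1 ((hasDerivAt_id' t).const_mul k)
  simp only [pow_one] at h
  exact (h.congr_deriv (by push_cast; ring)).deriv

theorem hasDerivAt_deriv_mul_div_sq_add (ha : 0 < a) (t : ℝ) :
    HasDerivAt (deriv fun t => k * t / (t ^ 2 + a))
      (k * (2 * t ^ 3 - 6 * a * t) / (t ^ 2 + a) ^ 3) t := by
  rw [deriv_mul_div_sq_add k ha]
  exact (hasDerivAt_div_sq_add_pow ha 2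
    (((hasDerivAt_pow 2 t).const_sub a).const_mul k)).congr_deriv (by push_cast; ring)

theorem deriv_sq_deriv_mul_div_sq_add (ha : 0 < a) (t : ℝ) :
    deriv (fun t => deriv (fun t => k * t / (t ^ 2 + a)) t ^ 2) t =
      2 * (k * (a - t ^ 2) / (t ^ 2 + a) ^ 2) *
        (k * (2 * t ^ 3 - 6 * a * t) / (t ^ 2 + a) ^ 3) := by
  rw [((hasDerivAt_deriv_mul_div_sq_add k ha t).fun_pow 2).deriv, deriv_mul_div_sq_add k ha]
  norm_num

theorem iteratedDeriv_two_mul_div_sq_add (ha : 0 < a) :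
    iteratedDeriv 2 (fun t => k * t / (t ^ 2 + a)) =
      fun t => k * (2 * t ^ 3 - 6 * a * t) / (t ^ 2 + a) ^ 3 := by
  rw [iteratedDeriv_succ, iteratedDeriv_one]
  exact funext fun t => (hasDerivAt_deriv_mul_div_sq_add k ha t).deriv

theorem iteratedDeriv_four_mul_div_sq_add (ha : 0 < a) (t : ℝ) :
    iteratedDeriv 4 (fun t => k * t / (t ^ 2 + a)) t =
      k * (24 * t ^ 5 - 240 * a * t ^ 3 + 120 * a ^ 2 * t) / (t ^ 2 + a) ^ 5 := by
  have third : deriv (iteratedDeriv 2 fun t => k * t / (t ^ 2 + a)) =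
      fun t => k * (-6 * t ^ 4 + 36 * a * t ^ 2 - 6 * a ^ 2) / (t ^ 2 + a) ^ 4 := by
    rw [iteratedDeriv_two_mul_div_sq_add k ha]
    exact funext fun t => ((hasDerivAt_div_sq_add_pow ha 3
      ((((hasDerivAt_pow 3 t).const_mul 2).fun_sub
        ((hasDerivAt_id' t).const_mul (6 * a))).const_mul k)).congr_deriv
      (by push_cast; ring)).deriv
  rw [iteratedDeriv_succ, iteratedDeriv_succ, third]
  exact ((hasDerivAt_div_sq_add_pow ha 4 (((((hasDerivAt_pow 4 t).const_mul (-6)).fun_add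
    ((hasDerivAt_pow 2 t).const_mul (36 * a))).sub_const (6 * a ^ 2)).const_mul k)).congr_deriv
    (by push_cast; ring)).deriv

theorem iteratedDeriv_two_div_sq_add (ha : 0 < a) (t : ℝ) :
    iteratedDeriv 2 (fun t => k / (t ^ 2 + a)) t = k * (6 * t ^ 2 - 2 * a) / (t ^ 2 + a) ^ 3 := by
  have first : deriv (fun t => k / (t ^ 2 + a)) = fun t => -2 * k * t / (t ^ 2 + a) ^ 2 := by
    funext t
    have h := hasDerivAt_div_sq_add_pow ha 1 (hasDerivAt_const t k)
    simp only [pow_one] at h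
    exact (h.congr_deriv (by push_cast; ring)).deriv
  rw [iteratedDeriv_succ, iteratedDeriv_one, first]
  exact ((hasDerivAt_div_sq_add_pow ha 2 ((hasDerivAt_id' t).const_mul (-2 * k))).congr_deriv
    (by push_cast; ring)).deriv

end

theorem stmt_5 (σ : ℝ) (hσ : 1 / 3 < σ)
    (q₀ : ℝ → ℝ → ℝ)
    (hq₀ : ∀ x y : ℝ,
      q₀ x y = -8 * (σ - 1 / 3) * x / (x ^ 2 + y ^ 2 + 3 * σ - 1)) :
    ∀ x y : ℝ,
      (σ - 1 / 3) * iteratedDeriv 4 (fun t => q₀ t y) x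
        - iteratedDeriv 2 (fun t => q₀ t y) x
        - iteratedDeriv 2 (fun s => q₀ x s) y
        - (3 / 2) * deriv (fun t => (deriv (fun t' => q₀ t' y) t) ^ 2) x = 0 := by
  intro x y
  have hx : 0 < x ^ 2 + 3 * σ - 1 := by nlinarith [sq_nonneg x]
  have hy : 0 < y ^ 2 + 3 * σ - 1 := by nlinarith [sq_nonneg y]
  have slice_x : (fun t => q₀ t y) =
      fun t => -8 * (σ - 1 / 3) * t / (t ^ 2 + (y ^ 2 + 3 * σ - 1)) := by
    funext t; rw [hq₀]; congr 1; ring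
  have slice_y : (fun s => q₀ x s) =
      fun s => -8 * (σ - 1 / 3) * x / (s ^ 2 + (x ^ 2 + 3 * σ - 1)) := by
    funext s; rw [hq₀]; congr 1; ring
  rw [slice_x, slice_y, iteratedDeriv_four_mul_div_sq_add _ hy,
    iteratedDeriv_two_mul_div_sq_add _ hy, iteratedDeriv_two_div_sq_add _ hx,
    deriv_sq_deriv_mul_div_sq_add _ hy,
    show y ^ 2 + (x ^ 2 + 3 * σ - 1) = x ^ 2 + (y ^ 2 + 3 * σ - 1) by ring]
  have hD : x ^ 2 + (y ^ 2 + 3 * σ - 1) ≠ 0 := by positivity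
  field_simp
  ring
end

section
/- There is a constant C > 0 such that for all ε ∈ (0,1], σ ≥ 0, and all m₁, m₂ ∈ ℝ, with k = (ε m₁, ε² m₂), the symbol Ŝ(m₁,m₂) = ε^{-4}(1 + ε² + σ|k|²)(1 + |k|²/3)|k|(tanh|k| - |k|/(1+|k|²/3)) satisfies Ŝ(m₁,m₂) ≤ C(1+σ) ε² (m₁² + ε² m₂²)³ whenever |k| ≤ 1. -/
/-!
Comparing derivatives (`tanh' = 1 - tanh²`) gives `tanh x ≤ x - x³/3 + 2x⁵/15` for `x ≥ 0`, while the
Padé approximant satisfies `x / (1 + x²/3) ≥ x - x³/3`; hence the bracket is at most `2k⁵/15`. On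
`k ≤ 1` the prefactors are bounded by a multiple of `1 + σ`, and `k⁶ = ε⁶ (m₁² + ε² m₂²)³`.
-/

open Real

lemma le_of_hasDerivAt_le_of_le {f g f' g' : ℝ → ℝ} {a x : ℝ}
    (hf : ∀ y, HasDerivAt f (f' y) y) (hg : ∀ y, HasDerivAt g (g' y) y) (ha : f a ≤ g a)
    (hd : ∀ y, a ≤ y → f' y ≤ g' y) (hx : a ≤ x) : f x ≤ g x :=
  image_le_of_deriv_right_le_deriv_boundary (b := x)
    (fun y _ => (hf y).continuousAt.continuousWithinAt) (fun y _ => (hf y).hasDerivWithinAt) ha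
    (fun y _ => (hg y).continuousAt.continuousWithinAt) (fun y _ => (hg y).hasDerivWithinAt)
    (fun y hy => hd y hy.1) ⟨hx, le_rfl⟩

namespace Real

lemma hasDerivAt_tanh (x : ℝ) : HasDerivAt tanh (1 - tanh x ^ 2) x := by
  have h := (hasDerivAt_sinh x).div (hasDerivAt_cosh x) (cosh_pos x).ne'
  rw [show sinh / cosh = tanh from funext fun y => (tanh_eq_sinh_div_cosh y).symm] at h
  refine h.congr_deriv ?_
  rw [tanh_eq_sinh_div_cosh]
  field_simp

lemma tanh_nonneg {x : ℝ} (hx : 0 ≤ x) : 0 ≤ tanh x := by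
  rw [tanh_eq_sinh_div_cosh]
  exact div_nonneg (sinh_nonneg_iff.2 hx) (cosh_pos x).le

lemma tanh_le_self {x : ℝ} (hx : 0 ≤ x) : tanh x ≤ x := by
  refine le_of_hasDerivAt_le_of_le hasDerivAt_tanh hasDerivAt_id' (by simp)
    (fun y _ => ?_) hx
  nlinarith [sq_nonneg (tanh y)]

lemma sub_pow_three_div_three_le_tanh {x : ℝ} (hx : 0 ≤ x) : x - x ^ 3 / 3 ≤ tanh x := by
  have hp : ∀ y : ℝ, HasDerivAt (fun t => t - t ^ 3 / 3) (1 - y ^ 2) y := fun y =>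
    ((hasDerivAt_id' y).sub ((hasDerivAt_pow 3 y).div_const 3)).congr_deriv (by ring)
  refine le_of_hasDerivAt_le_of_le hp hasDerivAt_tanh (by simp) (fun y hy => ?_) hx
  nlinarith [tanh_nonneg hy, tanh_le_self hy]

lemma tanh_le_taylor_five {x : ℝ} (hx : 0 ≤ x) :
    tanh x ≤ x - x ^ 3 / 3 + 2 * x ^ 5 / 15 := by
  have hp : ∀ y : ℝ, HasDerivAt (fun t => t - t ^ 3 / 3 + 2 * t ^ 5 / 15)
      (1 - y ^ 2 + 2 * y ^ 4 / 3) y := fun y =>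
    (((hasDerivAt_id' y).sub ((hasDerivAt_pow 3 y).div_const 3)).add
      (((hasDerivAt_pow 5 y).const_mul 2).div_const 15)).congr_deriv (by ring)
  refine le_of_hasDerivAt_le_of_le hasDerivAt_tanh hp (by simp) (fun y hy => ?_) hx
  -- `tanh² y ≥ y² - 2y⁴/3`: from the cubic lower bound while `y² ≤ 3`, trivially beyond.
  rcases le_total (y ^ 2) 3 with hy3 | hy3
  · have hcubic := sub_pow_three_div_three_le_tanh hy
    have hpos : 0 ≤ y - y ^ 3 / 3 := by nlinarith
    nlinarith [mul_le_mul hcubic hcubic hpos (hpos.trans hcubic), pow_nonneg hy 6]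
  · nlinarith [sq_nonneg (tanh y), pow_nonneg hy 4]

lemma tanh_sub_pade_le {x : ℝ} (hx : 0 ≤ x) :
    tanh x - x / (1 + x ^ 2 / 3) ≤ 2 * x ^ 5 / 15 := by
  have hpade : x - x ^ 3 / 3 ≤ x / (1 + x ^ 2 / 3) := by
    rw [le_div_iff₀ (by positivity)]
    nlinarith [pow_nonneg hx 5]
  linarith [tanh_le_taylor_five hx]

end Real

theorem stmt_12 :
    ∃ C : ℝ, 0 < C ∧
      ∀ ε σ m₁ m₂ k : ℝ, 0 < ε → ε ≤ 1 → 0 ≤ σ →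
        k = Real.sqrt (ε ^ 2 * m₁ ^ 2 + ε ^ 4 * m₂ ^ 2) → k ≤ 1 →
        (ε ^ 4)⁻¹ * ((1 + ε ^ 2 + σ * k ^ 2) * (1 + k ^ 2 / 3) * k *
            (Real.tanh k - k / (1 + k ^ 2 / 3)))
          ≤ C * (1 + σ) * ε ^ 2 * (m₁ ^ 2 + ε ^ 2 * m₂ ^ 2) ^ 3 := by
  refine ⟨1, one_pos, fun ε σ m₁ m₂ k hε hε1 hσ hk hk1 => ?_⟩
  have hk0 : 0 ≤ k := hk ▸ sqrt_nonneg _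
  have hk6 : k ^ 6 = ε ^ 4 * (ε ^ 2 * (m₁ ^ 2 + ε ^ 2 * m₂ ^ 2) ^ 3) := by
    rw [show k ^ 6 = (k ^ 2) ^ 3 by ring, hk, sq_sqrt (by positivity)]
    ring
  have hprefactor : (1 + ε ^ 2 + σ * k ^ 2) * (1 + k ^ 2 / 3) * (2 / 15) ≤ 1 + σ := by
    have hk2 : k ^ 2 ≤ 1 := by nlinarith
    have hε2 : ε ^ 2 ≤ 1 := by nlinarith
    nlinarith [mul_nonneg hσ (sq_nonneg k), mul_le_of_le_one_right hσ hk2]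
  rw [inv_mul_le_iff₀ (by positivity)]
  calc (1 + ε ^ 2 + σ * k ^ 2) * (1 + k ^ 2 / 3) * k * (tanh k - k / (1 + k ^ 2 / 3))
      ≤ (1 + ε ^ 2 + σ * k ^ 2) * (1 + k ^ 2 / 3) * k * (2 * k ^ 5 / 15) :=
        mul_le_mul_of_nonneg_left (tanh_sub_pade_le hk0) (by positivity)
    _ = (1 + ε ^ 2 + σ * k ^ 2) * (1 + k ^ 2 / 3) * (2 / 15) * k ^ 6 := by ring
    _ ≤ (1 + σ) * k ^ 6 := mul_le_mul_of_nonneg_right hprefactor (by positivity)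
    _ = ε ^ 4 * (1 * (1 + σ) * ε ^ 2 * (m₁ ^ 2 + ε ^ 2 * m₂ ^ 2) ^ 3) := by rw [hk6]; ring
end
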